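/- String-level substitution theorem for L_t (no context of L_t is referentially opaque): If toString φ = l ++ toString ψ ++ r and ψ' is a formula with eval ψ' = eval ψ, then there exists a formula φ' such that toString φ' = l ++ toString ψ' ++ r and eval φ' = eval φ. Thus, in the strongly transparent language L_t, substituting any expression occurrence by an expression of equal denotation yields a sentence of L_t with the same denotation. -/
import Mathlib


/-- Propositional formulas of the logic language. -/
inductive Φ : Type
  | tt : Φ
  | ff : Φ
  | neg : Φ → Φ
  | conj : Φ → Φ → Φ
  | disj : Φ → Φ → Φ
  deriving DecidableEq

/-- Standard Boolean evaluation (the semantics of the transparent language `L_t`). -/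
def eval : Φ → Bool
  | .tt => true
  | .ff => false
  | .neg φ => !eval φ
  | .conj φ ψ => eval φ && eval ψ
  | .disj φ ψ => eval φ || eval ψ

/-- One-hole formula contexts. -/
inductive Ctx : Type
  | hole : Ctx
  | negC : Ctx → Ctx
  | conjL : Ctx → Φ → Ctx
  | conjR : Φ → Ctx → Ctx
  | disjL : Ctx → Φ → Ctx
  | disjR : Φ → Ctx → Ctx

/-- Plug a formula into the hole of a context. -/
def fill : Ctx → Φ → Φ
  | .hole, φ => φ
  | .negC C, φ => .neg (fill C φ)
  | .conjL C ψ, φ => .conj (fill C φ) ψ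
  | .conjR χ C, φ => .conj χ (fill C φ)
  | .disjL C ψ, φ => .disj (fill C φ) ψ
  | .disjR χ C, φ => .disj χ (fill C φ)
/-- The seven-letter alphabet Σ₀ = {(, ), ∧, ∨, ¬, T, F}. -/
inductive Alph : Type
  | lp : Alph   -- (
  | rp : Alph   -- )
  | and : Alph  -- ∧
  | or : Alph   -- ∨
  | not : Alph  -- ¬
  | T : Alph
  | F : Alph
  deriving DecidableEq

/-- Fully parenthesized string encoding of formulas (the language `L_t`). -/
def toStr : Φ → List Alph
  | .tt => [.T]
  | .ff => [.F]
  | .neg φ => [.lp, .not] ++ toStr φ ++ [.rp]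
  | .conj φ ψ => [.lp] ++ toStr φ ++ [.and] ++ toStr ψ ++ [.rp]
  | .disj φ ψ => [.lp] ++ toStr φ ++ [.or] ++ toStr ψ ++ [.rp]

/-! ### Auxiliary machinery -/

/-- Weight of a letter for the parenthesis-balance count. -/
def wt : Alph → ℤ
  | .lp => 1
  | .rp => -1
  | _ => 0

/-- Parenthesis balance of a string. -/
def bal (s : List Alph) : ℤ := (s.map wt).sum

@[simp] lemma bal_nil : bal ([] : List Alph) = 0 := rfl
@[simp] lemma bal_cons (a : Alph) (t : List Alph) : bal (a :: t) = wt a + bal t := by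
  simp [bal]
@[simp] lemma bal_append (s t : List Alph) : bal (s ++ t) = bal s + bal t := by
  simp [bal]

lemma toStr_ne_nil (φ : Φ) : toStr φ ≠ [] := by cases φ <;> simp [toStr]

lemma toStr_head (φ : Φ) :
    (∃ t, toStr φ = .lp :: t) ∨ toStr φ = [.T] ∨ toStr φ = [.F] := by
  cases φ <;> simp [toStr]

lemma toStr_ne_cons_and (ψ : Φ) (t : List Alph) : toStr ψ ≠ .and :: t := by
  rcases toStr_head ψ with ⟨s, hs⟩ | hs | hs <;> simp_all

lemma toStr_ne_cons_or (ψ : Φ) (t : List Alph) : toStr ψ ≠ .or :: t := by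
  rcases toStr_head ψ with ⟨s, hs⟩ | hs | hs <;> simp_all

lemma toStr_ne_cons_not (ψ : Φ) (t : List Alph) : toStr ψ ≠ .not :: t := by
  rcases toStr_head ψ with ⟨s, hs⟩ | hs | hs <;> simp_all

lemma toStr_ne_cons_rp (ψ : Φ) (t : List Alph) : toStr ψ ≠ .rp :: t := by
  rcases toStr_head ψ with ⟨s, hs⟩ | hs | hs <;> simp_all

@[simp] lemma bal_toStr (φ : Φ) : bal (toStr φ) = 0 := by
  induction φ <;> simp [toStr, wt, *]

lemma toStr_neg (χ : Φ) : toStr (.neg χ) = .lp :: .not :: (toStr χ ++ [.rp]) := by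
  simp [toStr]

lemma toStr_conj (a b : Φ) :
    toStr (.conj a b) = .lp :: (toStr a ++ .and :: (toStr b ++ [.rp])) := by
  simp [toStr]

lemma toStr_disj (a b : Φ) :
    toStr (.disj a b) = .lp :: (toStr a ++ .or :: (toStr b ++ [.rp])) := by
  simp [toStr]

/-- Every prefix of `toStr φ` has nonnegative balance, and every nonempty proper prefix
has strictly positive balance. -/
lemma prefix_bal : ∀ (φ : Φ) (p q : List Alph), toStr φ = p ++ q →
    0 ≤ bal p ∧ (p ≠ [] → q ≠ [] → 1 ≤ bal p) := by
  intro φ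
  induction φ with
  | tt =>
    intro p q h
    simp only [toStr] at h
    rcases p with _ | ⟨a, p⟩
    · simp
    · simp only [List.cons_append, List.cons.injEq] at h
      obtain ⟨rfl, h⟩ := h
      obtain ⟨rfl, rfl⟩ := List.append_eq_nil_iff.mp h.symm
      simp [wt]
  | ff =>
    intro p q h
    simp only [toStr] at h
    rcases p with _ | ⟨a, p⟩
    · simp
    · simp only [List.cons_append, List.cons.injEq] at h
      obtain ⟨rfl, h⟩ := h
      obtain ⟨rfl, rfl⟩ := List.append_eq_nil_iff.mp h.symm
      simp [wt]
  | neg χ ih =>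
    intro p q h
    rw [toStr_neg] at h
    rcases p with _ | ⟨a, p₁⟩
    · simp
    simp only [List.cons_append, List.cons.injEq] at h
    obtain ⟨rfl, h⟩ := h
    rcases p₁ with _ | ⟨b, p₂⟩
    · simp [wt]
    simp only [List.cons_append, List.cons.injEq] at h
    obtain ⟨rfl, h⟩ := h
    rcases List.append_eq_append_iff.mp h with ⟨u, h1, h2⟩ | ⟨u, h1, h2⟩
    · -- h1 : p₂ = toStr χ ++ u, h2 : [.rp] = u ++ q
      subst h1
      rcases u with _ | ⟨c, u'⟩
      · simp [wt]
      · simp only [List.cons_append, List.cons.injEq] at h2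
        obtain ⟨rfl, h2⟩ := h2
        obtain ⟨rfl, rfl⟩ := List.append_eq_nil_iff.mp h2.symm
        simp [wt]
    · -- h1 : toStr χ = p₂ ++ u, h2 : q = u ++ [.rp]
      have h3 := (ih p₂ u h1).1
      refine ⟨?_, fun _ _ => ?_⟩ <;> · simp [wt]; omega
  | conj a b iha ihb =>
    intro p q h
    rw [toStr_conj] at h
    rcases p with _ | ⟨x, p₁⟩
    · simp
    simp only [List.cons_append, List.cons.injEq] at h
    obtain ⟨rfl, h⟩ := h
    rcases List.append_eq_append_iff.mp h with ⟨u, h1, h2⟩ | ⟨u, h1, h2⟩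
    · -- h1 : p₁ = toStr a ++ u, h2 : .and :: (toStr b ++ [.rp]) = u ++ q
      subst h1
      rcases u with _ | ⟨c, u₁⟩
      · simp [wt]
      simp only [List.cons_append, List.cons.injEq] at h2
      obtain ⟨rfl, h2⟩ := h2
      rcases List.append_eq_append_iff.mp h2 with ⟨v, h3, h4⟩ | ⟨v, h3, h4⟩
      · -- h3 : u₁ = toStr b ++ v, h4 : [.rp] = v ++ q
        subst h3
        rcases v with _ | ⟨d, v'⟩
        · simp [wt]
        · simp only [List.cons_append, List.cons.injEq] at h4
          obtain ⟨rfl, h4⟩ := h4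
          obtain ⟨rfl, rfl⟩ := List.append_eq_nil_iff.mp h4.symm
          simp [wt]
      · -- h3 : toStr b = u₁ ++ v, h4 : q = v ++ [.rp]
        have h5 := (ihb u₁ v h3).1
        refine ⟨?_, fun _ _ => ?_⟩ <;> · simp [wt]; omega
    · -- h1 : toStr a = p₁ ++ u, h2 : q = u ++ (.and :: (toStr b ++ [.rp]))
      have h3 := (iha p₁ u h1).1
      refine ⟨?_, fun _ _ => ?_⟩ <;> · simp [wt]; omega
  | disj a b iha ihb =>
    intro p q h
    rw [toStr_disj] at h
    rcases p with _ | ⟨x, p₁⟩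
    · simp
    simp only [List.cons_append, List.cons.injEq] at h
    obtain ⟨rfl, h⟩ := h
    rcases List.append_eq_append_iff.mp h with ⟨u, h1, h2⟩ | ⟨u, h1, h2⟩
    · subst h1
      rcases u with _ | ⟨c, u₁⟩
      · simp [wt]
      simp only [List.cons_append, List.cons.injEq] at h2
      obtain ⟨rfl, h2⟩ := h2
      rcases List.append_eq_append_iff.mp h2 with ⟨v, h3, h4⟩ | ⟨v, h3, h4⟩
      · subst h3
        rcases v with _ | ⟨d, v'⟩
        · simp [wt]
        · simp only [List.cons_append, List.cons.injEq] at h4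
          obtain ⟨rfl, h4⟩ := h4
          obtain ⟨rfl, rfl⟩ := List.append_eq_nil_iff.mp h4.symm
          simp [wt]
      · have h5 := (ihb u₁ v h3).1
        refine ⟨?_, fun _ _ => ?_⟩ <;> · simp [wt]; omega
    · have h3 := (iha p₁ u h1).1
      refine ⟨?_, fun _ _ => ?_⟩ <;> · simp [wt]; omega

lemma prefix_nonneg (φ : Φ) (p q : List Alph) (h : toStr φ = p ++ q) : 0 ≤ bal p :=
  (prefix_bal φ p q h).1

lemma prefix_pos (φ : Φ) (p q : List Alph) (h : toStr φ = p ++ q)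
    (hp : p ≠ []) (hq : q ≠ []) : 1 ≤ bal p :=
  (prefix_bal φ p q h).2 hp hq

lemma suffix_nonpos (φ : Φ) (p q : List Alph) (h : toStr φ = p ++ q) : bal q ≤ 0 := by
  have h0 : bal (toStr φ) = 0 := bal_toStr φ
  rw [h, bal_append] at h0
  have := prefix_nonneg φ p q h
  omega

/-- A `toStr`-string cannot end strictly inside another one: if `toStr ψ = u ++ [.rp]`
where `u` is a suffix of some `toStr χ`, we get a contradiction. -/
lemma no_suffix_rp (ψ χ : Φ) (l u : List Alph)
    (h1 : toStr ψ = u ++ [.rp]) (h2 : toStr χ = l ++ u) : False := by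
  have hψ : bal (toStr ψ) = 0 := bal_toStr ψ
  rw [h1] at hψ
  have hu := suffix_nonpos χ l u h2
  simp [wt] at hψ
  omega

lemma unique_prefix (a c : Φ) (s t : List Alph) (h : toStr a ++ s = toStr c ++ t) :
    toStr a = toStr c ∧ s = t := by
  rcases List.append_eq_append_iff.mp h with ⟨u, h1, h2⟩ | ⟨u, h1, h2⟩
  · -- h1 : toStr c = toStr a ++ u, h2 : s = u ++ t
    rcases u with _ | ⟨x, u⟩
    · simp at h1 h2; exact ⟨h1.symm, h2⟩
    · exfalso
      have := prefix_pos c (toStr a) (x :: u) h1 (toStr_ne_nil a) (by simp)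
      rw [bal_toStr] at this
      omega
  · -- h1 : toStr a = toStr c ++ u, h2 : t = u ++ s
    rcases u with _ | ⟨x, u⟩
    · simp at h1 h2; exact ⟨h1, h2.symm⟩
    · exfalso
      have := prefix_pos a (toStr c) (x :: u) h1 (toStr_ne_nil c) (by simp)
      rw [bal_toStr] at this
      omega

lemma head_of_append (ψ : Φ) (r s : List Alph) (c : Alph)
    (h : c :: s = toStr ψ ++ r) : ∃ t, toStr ψ = c :: t := by
  rcases hψ : toStr ψ with _ | ⟨x, t⟩
  · exact absurd hψ (toStr_ne_nil ψ)
  · rw [hψ, List.cons_append] at h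
    injection h with h1 _
    subst h1
    exact ⟨t, rfl⟩

lemma toStr_inj : ∀ φ ψ : Φ, toStr φ = toStr ψ → φ = ψ := by
  intro φ
  induction φ with
  | tt =>
    intro ψ h
    rcases ψ with _ | _ | χ | ⟨c, d⟩ | ⟨c, d⟩ <;>
      simp only [toStr, toStr_neg, toStr_conj, toStr_disj] at h <;> simp_all
  | ff =>
    intro ψ h
    rcases ψ with _ | _ | χ | ⟨c, d⟩ | ⟨c, d⟩ <;>
      simp only [toStr, toStr_neg, toStr_conj, toStr_disj] at h <;> simp_all
  | neg χ ih =>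
    intro ψ h
    rcases ψ with _ | _ | χ' | ⟨c, d⟩ | ⟨c, d⟩
    · simp [toStr_neg, toStr] at h
    · simp [toStr_neg, toStr] at h
    · rw [toStr_neg, toStr_neg] at h
      simp only [List.cons.injEq, true_and] at h
      have := List.append_inj_left' h rfl
      exact congrArg Φ.neg (ih χ' this)
    · rw [toStr_neg, toStr_conj] at h
      simp only [List.cons.injEq, true_and] at h
      obtain ⟨t, ht⟩ := head_of_append c _ _ _ h
      exact absurd ht (toStr_ne_cons_not c t)
    · rw [toStr_neg, toStr_disj] at h
      simp only [List.cons.injEq, true_and] at h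
      obtain ⟨t, ht⟩ := head_of_append c _ _ _ h
      exact absurd ht (toStr_ne_cons_not c t)
  | conj a b iha ihb =>
    intro ψ h
    rcases ψ with _ | _ | χ' | ⟨c, d⟩ | ⟨c, d⟩
    · simp [toStr_conj, toStr] at h
    · simp [toStr_conj, toStr] at h
    · rw [toStr_conj, toStr_neg] at h
      simp only [List.cons.injEq, true_and] at h
      rcases toStr_head a with ⟨s, hs⟩ | hs | hs <;> rw [hs] at h <;> simp at h
    · rw [toStr_conj, toStr_conj] at h
      simp only [List.cons.injEq, true_and] at h
      obtain ⟨hac, h2⟩ := unique_prefix a c _ _ h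
      simp only [List.cons.injEq, true_and] at h2
      obtain ⟨hbd, _⟩ := unique_prefix b d _ _ h2
      rw [iha c hac, ihb d hbd]
    · rw [toStr_conj, toStr_disj] at h
      simp only [List.cons.injEq, true_and] at h
      obtain ⟨_, h2⟩ := unique_prefix a c _ _ h
      simp at h2
  | disj a b iha ihb =>
    intro ψ h
    rcases ψ with _ | _ | χ' | ⟨c, d⟩ | ⟨c, d⟩
    · simp [toStr_disj, toStr] at h
    · simp [toStr_disj, toStr] at h
    · rw [toStr_disj, toStr_neg] at h
      simp only [List.cons.injEq, true_and] at h
      rcases toStr_head a with ⟨s, hs⟩ | hs | hs <;> rw [hs] at h <;> simp at h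
    · rw [toStr_disj, toStr_conj] at h
      simp only [List.cons.injEq, true_and] at h
      obtain ⟨_, h2⟩ := unique_prefix a c _ _ h
      simp at h2
    · rw [toStr_disj, toStr_disj] at h
      simp only [List.cons.injEq, true_and] at h
      obtain ⟨hac, h2⟩ := unique_prefix a c _ _ h
      simp only [List.cons.injEq, true_and] at h2
      obtain ⟨hbd, _⟩ := unique_prefix b d _ _ h2
      rw [iha c hac, ihb d hbd]

/-- The case `l = []` of the substitution theorem. -/
lemma nil_case (φ ψ ψ' : Φ) (r : List Alph) (h : toStr φ = toStr ψ ++ r)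
    (heval : eval ψ' = eval ψ) :
    ∃ φ' : Φ, toStr φ' = toStr ψ' ++ r ∧ eval φ' = eval φ := by
  have hr : r = [] := by
    by_contra hr
    have := prefix_pos φ (toStr ψ) r h (toStr_ne_nil ψ) hr
    rw [bal_toStr] at this
    omega
  subst hr
  have : φ = ψ := toStr_inj φ ψ (by simpa using h)
  subst this
  exact ⟨ψ', by simp, heval⟩

/-- The case where the occurrence lies in the part `toStr b ++ [.rp]` at the end of a
compound formula. -/
lemma tail_case (b ψ ψ' : Φ) (u₂ r : List Alph)
    (hb : toStr b ++ [Alph.rp] = u₂ ++ (toStr ψ ++ r))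
    (IH : ∀ l r, toStr b = l ++ toStr ψ ++ r →
      ∃ b', toStr b' = l ++ toStr ψ' ++ r ∧ eval b' = eval b) :
    ∃ b' r₁, toStr b' = u₂ ++ toStr ψ' ++ r₁ ∧ r = r₁ ++ [Alph.rp] ∧ eval b' = eval b := by
  rcases List.eq_nil_or_concat' r with rfl | ⟨r₁, x, rfl⟩
  · exfalso
    simp only [List.append_nil] at hb
    rcases List.append_eq_append_iff.mp hb with ⟨u, h1, h2⟩ | ⟨u, h1, h2⟩
    · -- h1 : u₂ = toStr b ++ u, h2 : [.rp] = u ++ toStr ψ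
      rcases u with _ | ⟨c, u'⟩
      · simp only [List.nil_append] at h2
        exact toStr_ne_cons_rp ψ [] h2.symm
      · simp only [List.cons_append, List.cons.injEq] at h2
        exact toStr_ne_nil ψ (List.append_eq_nil_iff.mp h2.2.symm).2
    · -- h1 : toStr b = u₂ ++ u, h2 : toStr ψ = u ++ [.rp]
      exact no_suffix_rp ψ b u₂ u h2 h1
  · have hb' : (u₂ ++ toStr ψ ++ r₁) ++ [x] = toStr b ++ [Alph.rp] := by
      rw [hb]; simp [List.append_assoc]
    obtain ⟨h1, h2⟩ := List.append_inj' hb' rfl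
    have hx : x = Alph.rp := by injection h2
    obtain ⟨b', hb'', he⟩ := IH u₂ r₁ h1.symm
    exact ⟨b', r₁, hb'', by rw [hx], he⟩

/-- The case where the occurrence starts inside `toStr a` in a binary compound. -/
lemma left_case (a ψ ψ' : Φ) (l₁ u r tail : List Alph) (sep : Alph)
    (h1 : toStr a = l₁ ++ u)
    (h2 : toStr ψ ++ r = u ++ sep :: tail)
    (hsep : ∀ t, toStr ψ ≠ sep :: t)
    (IH : ∀ l r, toStr a = l ++ toStr ψ ++ r →
      ∃ a', toStr a' = l ++ toStr ψ' ++ r ∧ eval a' = eval a) :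
    ∃ a' v, toStr a' = l₁ ++ toStr ψ' ++ v ∧ r = v ++ sep :: tail ∧ eval a' = eval a := by
  rcases List.append_eq_append_iff.mp h2 with ⟨v, hv1, hv2⟩ | ⟨v, hv1, hv2⟩
  · -- hv1 : u = toStr ψ ++ v, hv2 : r = v ++ sep :: tail
    obtain ⟨a', ha', he⟩ := IH l₁ v (by rw [h1, hv1, List.append_assoc])
    exact ⟨a', v, ha', hv2, he⟩
  · -- hv1 : toStr ψ = u ++ v, hv2 : sep :: tail = v ++ r
    rcases v with _ | ⟨s, v₁⟩
    · -- v = [] : the occurrence is exactly the suffix u of toStr a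
      simp only [List.append_nil] at hv1
      simp only [List.nil_append] at hv2
      obtain ⟨a', ha', he⟩ := IH l₁ [] (by rw [h1, hv1]; simp)
      exact ⟨a', [], by simpa using ha', by rw [List.nil_append]; exact hv2.symm, he⟩
    · exfalso
      simp only [List.cons_append, List.cons.injEq] at hv2
      obtain ⟨rfl, _⟩ := hv2
      rcases u with _ | ⟨c, u'⟩
      · exact hsep v₁ (by simpa using hv1)
      · have hpos := prefix_pos ψ (c :: u') (sep :: v₁) hv1 (by simp) (by simp)
        have hnp := suffix_nonpos a l₁ (c :: u') h1
        omega

/-- String-level substitution theorem for `L_t`. -/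
theorem string_substitution (φ ψ ψ' : Φ) (l r : List Alph)
    (h : toStr φ = l ++ toStr ψ ++ r) (heval : eval ψ' = eval ψ) :
    ∃ φ' : Φ, toStr φ' = l ++ toStr ψ' ++ r ∧ eval φ' = eval φ := by
  induction φ generalizing l r with
  | tt =>
    rcases l with _ | ⟨x, l₁⟩
    · simpa using nil_case .tt ψ ψ' r (by simpa using h) heval
    · exfalso
      simp only [toStr, List.cons_append, List.cons.injEq] at h
      obtain ⟨_, h⟩ := h
      exact toStr_ne_nil ψ (List.append_eq_nil_iff.mp (List.append_eq_nil_iff.mp h.symm).1).2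
  | ff =>
    rcases l with _ | ⟨x, l₁⟩
    · simpa using nil_case .ff ψ ψ' r (by simpa using h) heval
    · exfalso
      simp only [toStr, List.cons_append, List.cons.injEq] at h
      obtain ⟨_, h⟩ := h
      exact toStr_ne_nil ψ (List.append_eq_nil_iff.mp (List.append_eq_nil_iff.mp h.symm).1).2
  | neg χ ih =>
    rcases l with _ | ⟨x, l₁⟩
    · simpa using nil_case (.neg χ) ψ ψ' r (by simpa using h) heval
    rw [toStr_neg] at h
    simp only [List.cons_append, List.cons.injEq] at h
    obtain ⟨rfl, h⟩ := h
    rcases l₁ with _ | ⟨y, l₂⟩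
    · exfalso
      simp only [List.nil_append] at h
      obtain ⟨t, ht⟩ := head_of_append ψ r _ _ h
      exact toStr_ne_cons_not ψ t ht
    simp only [List.cons_append, List.cons.injEq] at h
    obtain ⟨rfl, h⟩ := h
    obtain ⟨χ', r₁, hχ', hr, he⟩ := tail_case χ ψ ψ' l₂ r (by rw [h]; simp) ih
    refine ⟨.neg χ', ?_, ?_⟩
    · rw [toStr_neg, hχ', hr]; simp
    · simp [eval, he]
  | conj a b iha ihb =>
    rcases l with _ | ⟨x, l₁⟩
    · simpa using nil_case (.conj a b) ψ ψ' r (by simpa using h) heval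
    rw [toStr_conj] at h
    simp only [List.cons_append, List.cons.injEq] at h
    obtain ⟨rfl, h⟩ := h
    rw [List.append_assoc] at h
    rcases List.append_eq_append_iff.mp h.symm with ⟨u, h1, h2⟩ | ⟨u, h1, h2⟩
    · -- h1 : toStr a = l₁ ++ u, h2 : toStr ψ ++ r = u ++ (.and :: (toStr b ++ [.rp]))
      obtain ⟨a', v, ha', hr, he⟩ :=
        left_case a ψ ψ' l₁ u r _ .and h1 h2 (toStr_ne_cons_and ψ) iha
      refine ⟨.conj a' b, ?_, ?_⟩
      · rw [toStr_conj, ha', hr]; simp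
      · simp [eval, he]
    · -- h1 : l₁ = toStr a ++ u, h2 : .and :: (toStr b ++ [.rp]) = u ++ (toStr ψ ++ r)
      rcases u with _ | ⟨c, u₂⟩
      · exfalso
        simp only [List.nil_append] at h2
        obtain ⟨t, ht⟩ := head_of_append ψ r _ _ h2
        exact toStr_ne_cons_and ψ t ht
      simp only [List.cons_append, List.cons.injEq] at h2
      obtain ⟨rfl, h2⟩ := h2
      obtain ⟨b', r₁, hb', hr, he⟩ := tail_case b ψ ψ' u₂ r h2 ihb
      refine ⟨.conj a b', ?_, ?_⟩
      · rw [toStr_conj, hb', h1, hr]; simp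
      · simp [eval, he]
  | disj a b iha ihb =>
    rcases l with _ | ⟨x, l₁⟩
    · simpa using nil_case (.disj a b) ψ ψ' r (by simpa using h) heval
    rw [toStr_disj] at h
    simp only [List.cons_append, List.cons.injEq] at h
    obtain ⟨rfl, h⟩ := h
    rw [List.append_assoc] at h
    rcases List.append_eq_append_iff.mp h.symm with ⟨u, h1, h2⟩ | ⟨u, h1, h2⟩
    · obtain ⟨a', v, ha', hr, he⟩ :=
        left_case a ψ ψ' l₁ u r _ .or h1 h2 (toStr_ne_cons_or ψ) iha
      refine ⟨.disj a' b, ?_, ?_⟩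
      · rw [toStr_disj, ha', hr]; simp
      · simp [eval, he]
    · rcases u with _ | ⟨c, u₂⟩
      · exfalso
        simp only [List.nil_append] at h2
        obtain ⟨t, ht⟩ := head_of_append ψ r _ _ h2
        exact toStr_ne_cons_or ψ t ht
      simp only [List.cons_append, List.cons.injEq] at h2
      obtain ⟨rfl, h2⟩ := h2
      obtain ⟨b', r₁, hb', hr, he⟩ := tail_case b ψ ψ' u₂ r h2 ihb
      refine ⟨.disj a b', ?_, ?_⟩
      · rw [toStr_disj, hb', h1, hr]; simp
      · simp [eval, he]
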